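/- arXiv:2210.04334 — 3 statements merged into one kernel-verified Lean document; each statement's English description precedes it below -/
import Mathlib

section
/- Theorem 1 (FDR control of single-step QuTE, positively dependent p-values): for every graph G and every level α ∈ (0,1), if the vector of N p-values is PRDS on each null and every null p-value is superuniform, then the single-step QuTE procedure (c = 1) at level α satisfies FDR ≤ α·|H^0|/N. -/
/-!
For a hypothesis `i` hosted at node `a`, let `K i` be the largest local BH count `k̂^{b,1}` over the
nodes `b` within distance one of `a`. A masked p-value equals `1` and so exceeds every BH threshold
`α k / N < 1`; hence every local BH rejection set lies inside the QuTE rejection set `R`, giving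
`K i ≤ |R|`, while `i ∈ R` forces `P i ≤ α K i / N`. So the false discovery proportion is at most
`∑_{i ∈ H⁰} 1{P i ≤ α K i / N} / max (K i) 1`. As `K i` is a nonincreasing function of the
p-values, PRDS makes `g k = Pr(K i ≤ k | P i ≤ α k / N)` nondecreasing, and superuniformity bounds
`Pr(P i ≤ α k / N, K i = k) / k` by `(α / N) (g k - g (k - 1))`; the sum telescopes to at most
`α / N`, as in Benjamini–Yekutieli.
-/

open MeasureTheory ProbabilityTheory Finset

open Classical in
/-- The Benjamini–Hochberg count `k̂_α(P)`: the largest `k ∈ {0,…,N}` such that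
at least `k` of the p-values are `≤ α k / N`, where `N` is the number of hypotheses. -/
noncomputable def bhCount {I : Type*} [Fintype I] (α : ℝ) (P : I → ℝ) : ℕ :=
  Nat.findGreatest
    (fun k => k ≤ (Finset.univ.filter fun i => P i ≤ α * k / (Fintype.card I)).card)
    (Fintype.card I)

open Classical in
/-- The Benjamini–Hochberg rejection set `Rej_α(P) = {i : P i ≤ α k̂_α(P) / N}`. -/
noncomputable def bhRej {I : Type*} [Fintype I] (α : ℝ) (P : I → ℝ) : Finset I :=
  Finset.univ.filter fun i => P i ≤ α * (bhCount α P) / (Fintype.card I)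

open Classical in
/-- The p-value vector `P^{b,c}` known to node `b` after `c` rounds of communication:
every p-value hosted at a node of graph distance more than `c` from `b` is replaced by `1`. -/
noncomputable def quteMasked {V : Type*} (G : SimpleGraph V) (n : V → ℕ)
    (c : ℕ) (P : (Σ a : V, Fin (n a)) → ℝ) (b : V) : (Σ a : V, Fin (n a)) → ℝ :=
  fun i => if G.edist b i.1 ≤ c then P i else 1

open Classical in
/-- The rejection set of the `c`-step QuTE procedure at level `α`: hypothesis `j` at node `a`
is rejected iff some node `b` within graph distance `c` of `a` rejects it in its local BH test
at level `α` on the p-values it knows (unknown p-values set to `1`). -/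
noncomputable def quteRej {V : Type*} [Fintype V] (G : SimpleGraph V) (n : V → ℕ)
    (c : ℕ) (α : ℝ) (P : (Σ a : V, Fin (n a)) → ℝ) : Finset (Σ a : V, Fin (n a)) :=
  Finset.univ.filter fun i => ∃ b : V, G.edist i.1 b ≤ c ∧
    P i ≤ α * (bhCount α (quteMasked G n c P b)) / (Fintype.card (Σ a : V, Fin (n a)))

section BH

variable {I : Type*} [Fintype I]

lemma bhCount_le_card (α : ℝ) (P : I → ℝ) : bhCount α P ≤ Fintype.card I :=
  Nat.findGreatest_le _

lemma bhCount_le_card_bhRej (α : ℝ) (P : I → ℝ) : bhCount α P ≤ (bhRej α P).card :=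
  Nat.findGreatest_spec
    (P := fun k => k ≤ (univ.filter fun i => P i ≤ α * k / Fintype.card I).card)
    (m := 0) (Nat.zero_le _) (Nat.zero_le _)

lemma bhCount_antitone (α : ℝ) : Antitone (bhCount (I := I) α) := by
  intro P Q hPQ
  refine Nat.findGreatest_mono (fun k hk => hk.trans (card_le_card fun i hi => ?_)) le_rfl
  simp only [mem_filter, mem_univ, true_and] at hi ⊢
  exact (hPQ i).trans hi

lemma measurable_bhCount (α : ℝ) : Measurable (bhCount (I := I) α) := by
  refine measurable_findGreatest fun k _ => ?_
  have : Measurable fun x : I → ℝ =>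
      (univ.filter fun i => x i ≤ α * k / Fintype.card I).card := by
    simp only [card_filter]
    exact measurable_sum _ fun i _ => Measurable.ite
      (measurableSet_le (measurable_pi_apply i) measurable_const) measurable_const measurable_const
  exact this measurableSet_Ici

end BH

section QuTE

variable {V : Type*} (G : SimpleGraph V) (n : V → ℕ) (c : ℕ)

lemma quteMasked_mono {P Q : (Σ a : V, Fin (n a)) → ℝ} (hPQ : P ≤ Q) (b : V) :
    quteMasked G n c P b ≤ quteMasked G n c Q b := by
  intro i
  unfold quteMasked
  split_ifs
  exacts [hPQ i, le_rfl]

lemma measurable_quteMasked (b : V) : Measurable fun P => quteMasked G n c P b := by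
  refine measurable_pi_lambda _ fun i => ?_
  unfold quteMasked
  split_ifs
  exacts [measurable_pi_apply i, measurable_const]

variable [Fintype V] {α : ℝ}

noncomputable def quteCount (α : ℝ) (P : (Σ a : V, Fin (n a)) → ℝ) (i : Σ a : V, Fin (n a)) :
    ℕ :=
  (univ.filter fun b => G.edist i.1 b ≤ c).sup fun b => bhCount α (quteMasked G n c P b)

lemma quteCount_le_card (P : (Σ a : V, Fin (n a)) → ℝ) (i : Σ a : V, Fin (n a)) :
    quteCount G n c α P i ≤ Fintype.card (Σ a : V, Fin (n a)) :=
  Finset.sup_le fun _ _ => bhCount_le_card _ _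

lemma quteCount_antitone (i : Σ a : V, Fin (n a)) : Antitone fun P => quteCount G n c α P i :=
  fun _ _ hPQ => Finset.sup_mono_fun fun b _ => bhCount_antitone α (quteMasked_mono G n c hPQ b)

lemma measurable_quteCount (i : Σ a : V, Fin (n a)) :
    Measurable fun P => quteCount G n c α P i := by
  have key : Measurable ((univ.filter fun b => G.edist i.1 b ≤ c).sup
      fun b P => bhCount α (quteMasked G n c P b)) :=
    Finset.sup_induction measurable_const (fun _ hf _ hg => hf.sup hg)
      fun b _ => (measurable_bhCount α).comp (measurable_quteMasked G n c b)
  convert key using 1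
  ext P
  rw [Finset.sup_apply, quteCount]

lemma le_of_mem_quteRej (hα : 0 ≤ α) {P : (Σ a : V, Fin (n a)) → ℝ}
    {i : Σ a : V, Fin (n a)} (hi : i ∈ quteRej G n c α P) :
    P i ≤ α / Fintype.card (Σ a : V, Fin (n a)) * quteCount G n c α P i := by
  obtain ⟨-, b, hb, hPb⟩ := mem_filter.1 hi
  have hbK : bhCount α (quteMasked G n c P b) ≤ quteCount G n c α P i :=
    le_sup (f := fun b => bhCount α (quteMasked G n c P b)) (mem_filter.2 ⟨mem_univ b, hb⟩)
  rw [mul_div_right_comm] at hPb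
  exact hPb.trans (by gcongr)

lemma bhRej_quteMasked_subset_quteRej (hα0 : 0 ≤ α) (hα1 : α < 1)
    (P : (Σ a : V, Fin (n a)) → ℝ) (b : V) :
    bhRej α (quteMasked G n c P b) ⊆ quteRej G n c α P := by
  intro i hi
  set N := Fintype.card (Σ a : V, Fin (n a))
  have hP := (mem_filter.1 hi).2
  have hN : (0 : ℝ) < N := by exact_mod_cast Fintype.card_pos_iff.2 ⟨i⟩
  have hthreshold : α * bhCount α (quteMasked G n c P b) / N < 1 := by
    rw [div_lt_one hN]
    calc α * bhCount α (quteMasked G n c P b) ≤ α * N := by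
          gcongr; exact_mod_cast bhCount_le_card _ _
      _ < N := mul_lt_of_lt_one_left hN hα1
  have hb : G.edist b i.1 ≤ c := by
    by_contra hb
    simp only [quteMasked, hb, if_false] at hP
    linarith
  simp only [quteMasked, hb, if_true] at hP
  exact mem_filter.2 ⟨mem_univ i, b, by rwa [SimpleGraph.edist_comm], hP⟩

lemma quteCount_le_card_quteRej (hα0 : 0 ≤ α) (hα1 : α < 1)
    (P : (Σ a : V, Fin (n a)) → ℝ) (i : Σ a : V, Fin (n a)) :
    quteCount G n c α P i ≤ (quteRej G n c α P).card :=
  Finset.sup_le fun b _ => (bhCount_le_card_bhRej _ _).trans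
    (card_le_card (bhRej_quteMasked_subset_quteRej G n c hα0 hα1 P b))

end QuTE

lemma card_inter_div_le_sum_of_le_mul {I : Type*} [DecidableEq I] {R : Finset I} (H : Finset I)
    {x : I → ℝ} {s : ℝ} {K : I → ℕ} (hxR : ∀ i ∈ R, x i ≤ s * K i)
    (hKR : ∀ i ∈ R, K i ≤ R.card) :
    ((R ∩ H).card : ℝ) / (max R.card 1 : ℕ) ≤
      ∑ i ∈ H, if x i ≤ s * K i then ((max (K i) 1 : ℕ) : ℝ)⁻¹ else 0 := by
  rw [inter_comm, ← filter_mem_eq_inter, card_filter, Nat.cast_sum, sum_div]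
  refine sum_le_sum fun i _ => ?_
  by_cases hi : i ∈ R
  · rw [if_pos hi, if_pos (hxR i hi), Nat.cast_one, one_div]
    gcongr
    exact hKR i hi
  · rw [if_neg hi, Nat.cast_zero, zero_div]
    split_ifs <;> positivity

section FiniteValued

variable {Ω : Type*} {K : Ω → ℕ} {N : ℕ}

lemma indicator_comp_eq_sum (hK : ∀ ω, K ω ≤ N) (S : Set Ω) (f : ℕ → ℝ) (ω : Ω) :
    S.indicator (fun ω => f (K ω)) ω =
      ∑ k ∈ range (N + 1), (S ∩ K ⁻¹' {k}).indicator (fun _ => f k) ω := by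
  rw [sum_eq_single_of_mem (K ω) (mem_range.2 (Nat.lt_succ_of_le (hK ω)))]
  · by_cases hS : ω ∈ S <;> simp [hS]
  · intro k _ hk
    simp [Ne.symm hk]

variable [MeasurableSpace Ω] (μ : Measure Ω) [IsFiniteMeasure μ]

lemma integrable_indicator_comp (hKm : Measurable K) (hK : ∀ ω, K ω ≤ N) {S : Set Ω}
    (hS : MeasurableSet S) (f : ℕ → ℝ) : Integrable (S.indicator fun ω => f (K ω)) μ := by
  simp_rw [funext (indicator_comp_eq_sum hK S f)]
  exact integrable_finsetSum _ fun k _ =>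
    (integrable_const _).indicator (hS.inter (hKm (measurableSet_singleton k)))

lemma integral_indicator_comp (hKm : Measurable K) (hK : ∀ ω, K ω ≤ N) {S : Set Ω}
    (hS : MeasurableSet S) (f : ℕ → ℝ) :
    ∫ ω, S.indicator (fun ω => f (K ω)) ω ∂μ =
      ∑ k ∈ range (N + 1), μ.real (S ∩ K ⁻¹' {k}) * f k := by
  simp_rw [indicator_comp_eq_sum hK S f]
  rw [integral_finsetSum _ fun k _ =>
    (integrable_const _).indicator (hS.inter (hKm (measurableSet_singleton k)))]
  refine sum_congr rfl fun k _ => ?_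
  rw [integral_indicator_const _ (hS.inter (hKm (measurableSet_singleton k))), smul_eq_mul]

end FiniteValued

section PRDS

variable {Ω : Type*} [MeasurableSpace Ω] {μ : Measure Ω} {p : Ω → ℝ}

def IsSuperuniform (μ : Measure Ω) (p : Ω → ℝ) : Prop :=
  ∀ u ∈ Set.Icc (0 : ℝ) 1, μ {ω | p ω ≤ u} ≤ ENNReal.ofReal u

def IsPRDSOn {I : Type*} (μ : Measure Ω) (X : Ω → I → ℝ) (p : Ω → ℝ) : Prop :=
  ∀ D : Set (I → ℝ), MeasurableSet D →
    (∀ x ∈ D, ∀ y ∈ Set.Icc (0 : I → ℝ) 1, x ≤ y → y ∈ D) →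
    ∀ s t : ℝ, 0 < s → s ≤ t → t ≤ 1 → 0 < μ {ω | p ω ≤ s} →
      μ[{ω | X ω ∈ D} | {ω | p ω ≤ s}] ≤ μ[{ω | X ω ∈ D} | {ω | p ω ≤ t}]

lemma IsSuperuniform.measure_le_zero_eq_zero (hp : IsSuperuniform μ p) :
    μ {ω | p ω ≤ 0} = 0 := by
  simpa using hp 0 ⟨le_rfl, zero_le_one⟩

lemma IsSuperuniform.measureReal_le (hp : IsSuperuniform μ p) {u : ℝ} (hu : u ∈ Set.Icc 0 1) :
    μ.real {ω | p ω ≤ u} ≤ u := by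
  simpa [Measure.real, ENNReal.toReal_ofReal hu.1] using
    ENNReal.toReal_mono ENNReal.ofReal_ne_top (hp u hu)

lemma IsPRDSOn.monotoneOn_cond {I : Type*} {X : Ω → I → ℝ} {F : (I → ℝ) → ℕ}
    (hX : IsPRDSOn μ X p) (hp : IsSuperuniform μ p) (hF : Measurable F) (hFa : Antitone F)
    (m : ℕ) : MonotoneOn (fun s => μ[{ω | F (X ω) ≤ m} | {ω | p ω ≤ s}]) (Set.Icc 0 1) := by
  intro s hs t ht hst
  rcases eq_or_ne (μ {ω | p ω ≤ s}) 0 with h0 | h0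
  · simp [cond_eq_zero_of_meas_eq_zero h0]
  · have hs' : 0 < s := hs.1.lt_of_ne (by rintro rfl; exact h0 hp.measure_le_zero_eq_zero)
    exact hX {x | F x ≤ m} (hF measurableSet_Iic) (fun x hx y _ hxy => (hFa hxy).trans hx)
      s t hs' hst ht.2 (pos_iff_ne_zero.2 h0)

lemma measureReal_inter_eq_cond_mul [IsFiniteMeasure μ] {s : Set Ω} (hs : MeasurableSet s)
    (t : Set Ω) : μ.real (s ∩ t) = (μ[|s]).real t * μ.real s := by
  simp [Measure.real, ← cond_mul_eq_inter hs, ENNReal.toReal_mul]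

variable [IsProbabilityMeasure μ] {K : Ω → ℕ} {c : ℝ}

lemma measureReal_inter_preimage_succ_le (hp : IsSuperuniform μ p) (hpm : Measurable p)
    (hKm : Measurable K)
    (hK : ∀ m : ℕ, MonotoneOn (fun s => μ[{ω | K ω ≤ m} | {ω | p ω ≤ s}]) (Set.Icc 0 1))
    (hc : 0 ≤ c) {k : ℕ} (hk : c * ↑(k + 1) ≤ 1) :
    μ.real ({ω | p ω ≤ c * ↑(k + 1)} ∩ K ⁻¹' {k + 1}) ≤
      ((μ[|{ω | p ω ≤ c * ↑(k + 1)}]).real {ω | K ω ≤ k + 1} -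
        (μ[|{ω | p ω ≤ c * k}]).real {ω | K ω ≤ k}) * (c * ↑(k + 1)) := by
  set E := {ω | p ω ≤ c * ↑(k + 1)}
  have hthreshold : c * ↑(k + 1) ∈ Set.Icc 0 1 := ⟨by positivity, hk⟩
  have hck : c * k ≤ c * ↑(k + 1) := by gcongr; simp
  have hcond : (μ[|{ω | p ω ≤ c * k}]).real {ω | K ω ≤ k} ≤ (μ[|E]).real {ω | K ω ≤ k} :=
    ENNReal.toReal_mono (measure_ne_top _ _)
      (hK k ⟨by positivity, hck.trans hk⟩ hthreshold hck)
  have hTsub : {ω | K ω ≤ k} ⊆ {ω | K ω ≤ k + 1} := fun ω h => Nat.le_succ_of_le h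
  have hdiff : K ⁻¹' {k + 1} = {ω | K ω ≤ k + 1} \ {ω | K ω ≤ k} := by
    ext ω
    simp only [Set.mem_preimage, Set.mem_singleton_iff, Set.mem_sdiff, Set.mem_ofPred_eq]
    omega
  rw [measureReal_inter_eq_cond_mul (measurableSet_le hpm measurable_const), hdiff,
    measureReal_sdiff hTsub (hKm measurableSet_Iic)]
  gcongr
  · linarith [measureReal_mono (μ := μ[|E]) hTsub]
  · exact hp.measureReal_le hthreshold

lemma sum_measureReal_mul_inv_le (hp : IsSuperuniform μ p) (hpm : Measurable p)
    (hKm : Measurable K)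
    (hK : ∀ m : ℕ, MonotoneOn (fun s => μ[{ω | K ω ≤ m} | {ω | p ω ≤ s}]) (Set.Icc 0 1))
    (hc : 0 ≤ c) {N : ℕ} (hcN : c * N ≤ 1) :
    ∑ k ∈ range (N + 1), μ.real ({ω | p ω ≤ c * k} ∩ K ⁻¹' {k}) * ((max k 1 : ℕ) : ℝ)⁻¹ ≤ c := by
  set g : ℕ → ℝ := fun k => (μ[|{ω | p ω ≤ c * k}]).real {ω | K ω ≤ k}
  have hstep : ∀ k ∈ range N, μ.real ({ω | p ω ≤ c * ↑(k + 1)} ∩ K ⁻¹' {k + 1}) *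
      ((max (k + 1) 1 : ℕ) : ℝ)⁻¹ ≤ c * (g (k + 1) - g k) := by
    intro k hk
    have hk' : c * ↑(k + 1) ≤ 1 := le_trans (by gcongr; exact_mod_cast mem_range.1 hk) hcN
    rw [max_eq_left (Nat.le_add_left 1 k)]
    calc _ ≤ (g (k + 1) - g k) * (c * ↑(k + 1)) * (↑(k + 1))⁻¹ := by
          gcongr; exact measureReal_inter_preimage_succ_le hp hpm hKm hK hc hk'
      _ = c * (g (k + 1) - g k) := by field_simp
  have hzero : μ.real ({ω | p ω ≤ c * ((0 : ℕ) : ℝ)} ∩ K ⁻¹' {0}) = 0 :=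
    measureReal_mono_null Set.inter_subset_left
      (by simp [Measure.real, hp.measure_le_zero_eq_zero])
  have hgN : g N ≤ 1 := measureReal_le_one
  have hg0 : 0 ≤ g 0 := measureReal_nonneg
  rw [sum_range_succ', hzero, zero_mul, add_zero]
  calc _ ≤ ∑ k ∈ range N, c * (g (k + 1) - g k) := sum_le_sum hstep
    _ = c * (g N - g 0) := by rw [← mul_sum, sum_range_sub]
    _ ≤ c := mul_le_of_le_one_right hc (by linarith)

lemma integrable_indicator_inv (hpm : Measurable p) (hKm : Measurable K) {N : ℕ}
    (hKN : ∀ ω, K ω ≤ N) (c : ℝ) :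
    Integrable ({ω | p ω ≤ c * K ω}.indicator fun ω => ((max (K ω) 1 : ℕ) : ℝ)⁻¹) μ :=
  integrable_indicator_comp μ hKm hKN (measurableSet_le hpm (by fun_prop))
    fun k => ((max k 1 : ℕ) : ℝ)⁻¹

lemma integral_indicator_inv_le_of_isPRDSOn {I : Type*} {X : Ω → I → ℝ} {F : (I → ℝ) → ℕ}
    {N : ℕ} (hp : IsSuperuniform μ p) (hpm : Measurable p) (hX : IsPRDSOn μ X p)
    (hXm : Measurable X) (hF : Measurable F) (hFa : Antitone F) (hFN : ∀ x, F x ≤ N)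
    (hc : 0 ≤ c) (hcN : c * N ≤ 1) :
    ∫ ω, {ω | p ω ≤ c * F (X ω)}.indicator (fun ω => ((max (F (X ω)) 1 : ℕ) : ℝ)⁻¹) ω ∂μ ≤ c := by
  have hKm : Measurable fun ω => F (X ω) := hF.comp hXm
  rw [integral_indicator_comp μ (K := fun ω => F (X ω)) (f := fun k => ((max k 1 : ℕ) : ℝ)⁻¹)
    hKm (fun ω => hFN (X ω)) (measurableSet_le hpm (by fun_prop))]
  convert sum_measureReal_mul_inv_le hp hpm hKm (hX.monotoneOn_cond hp hF hFa) hc hcN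
    using 4 with k
  ext ω
  simp only [Set.mem_inter_iff, Set.mem_ofPred_eq, Set.mem_preimage, Set.mem_singleton_iff]
  constructor <;> rintro ⟨h, rfl⟩ <;> exact ⟨h, rfl⟩

end PRDS

theorem qute_single_step_fdr_control_prds_general
    {V : Type*} [Fintype V] [DecidableEq V] (G : SimpleGraph V)
    (n : V → ℕ)
    {Ω : Type*} [MeasurableSpace Ω] (μ : Measure Ω) [IsProbabilityMeasure μ]
    (P : Ω → (Σ a : V, Fin (n a)) → ℝ)
    (hPmeas : ∀ i, Measurable fun ω => P ω i)
    (H0 : Finset (Σ a : V, Fin (n a)))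
    (hnull : ∀ i ∈ H0, ∀ u ∈ Set.Icc (0 : ℝ) 1,
      μ {ω | P ω i ≤ u} ≤ ENNReal.ofReal u)
    -- PRDS on each null: for every measurable nondecreasing set `D ⊆ [0,1]^N` and
    -- all `0 < s ≤ t ≤ 1` with `Pr(P i ≤ s) > 0`,
    -- `Pr(P ∈ D | P i ≤ s) ≤ Pr(P ∈ D | P i ≤ t)`.
    (hPRDS : ∀ i ∈ H0, ∀ D : Set ((Σ a : V, Fin (n a)) → ℝ), MeasurableSet D →
      (∀ x ∈ D, ∀ y ∈ Set.Icc (0 : (Σ a : V, Fin (n a)) → ℝ) 1, x ≤ y → y ∈ D) →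
      ∀ s t : ℝ, 0 < s → s ≤ t → t ≤ 1 → 0 < μ {ω | P ω i ≤ s} →
        (μ[|{ω | P ω i ≤ s}]) {ω | P ω ∈ D} ≤ (μ[|{ω | P ω i ≤ t}]) {ω | P ω ∈ D})
    (α : ℝ) (hα : α ∈ Set.Ioo (0 : ℝ) 1) :
    ∫ ω, (((quteRej G n 1 α (P ω) ∩ H0).card : ℝ) /
        (max ((quteRej G n 1 α (P ω)).card) 1 : ℕ)) ∂μ
      ≤ α * H0.card / Fintype.card (Σ a : V, Fin (n a)) := by
  obtain ⟨hα0, hα1⟩ := hα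
  set N := Fintype.card (Σ a : V, Fin (n a))
  have hc : 0 ≤ α / N := by positivity
  have hcN : α / N * N ≤ 1 := by
    rcases eq_or_ne (N : ℝ) 0 with hN | hN
    · simp [hN]
    · rw [div_mul_cancel₀ α hN]; exact hα1.le
  have hPm : Measurable P := measurable_pi_lambda _ hPmeas
  set f : (Σ a : V, Fin (n a)) → Ω → ℝ := fun i =>
    {ω | P ω i ≤ α / N * quteCount G n 1 α (P ω) i}.indicator
      fun ω => ((max (quteCount G n 1 α (P ω) i) 1 : ℕ) : ℝ)⁻¹
  have hf : ∀ i, Integrable (f i) μ := fun i =>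
    integrable_indicator_inv (hPmeas i) ((measurable_quteCount G n 1 i).comp hPm)
      (fun ω => quteCount_le_card G n 1 (P ω) i) _
  have hfdp : ∀ ω, ((quteRej G n 1 α (P ω) ∩ H0).card : ℝ) /
      (max (quteRej G n 1 α (P ω)).card 1 : ℕ) ≤ ∑ i ∈ H0, f i ω := fun ω => by
    simpa only [f, Set.indicator_apply, Set.mem_ofPred_eq] using
      card_inter_div_le_sum_of_le_mul H0 (fun i hi => le_of_mem_quteRej G n 1 hα0.le hi)
        (fun i _ => quteCount_le_card_quteRej G n 1 hα0.le hα1 (P ω) i)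
  calc _ ≤ ∫ ω, ∑ i ∈ H0, f i ω ∂μ :=
        integral_mono_of_nonneg (ae_of_all _ fun ω => by positivity)
          (integrable_finsetSum _ fun i _ => hf i) (ae_of_all _ hfdp)
    _ = ∑ i ∈ H0, ∫ ω, f i ω ∂μ := integral_finsetSum _ fun i _ => hf i
    _ ≤ ∑ i ∈ H0, α / N := sum_le_sum fun i hi =>
        integral_indicator_inv_le_of_isPRDSOn (F := fun x => quteCount G n 1 α x i)
          (hnull i hi) (hPmeas i) (hPRDS i hi) hPm (measurable_quteCount G n 1 i)
          (quteCount_antitone G n 1 i)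
          (fun x => quteCount_le_card G n 1 x i) hc hcN
    _ = α * H0.card / N := by rw [sum_const, nsmul_eq_mul]; ring

/-- **Theorem 1 (FDR control of single-step QuTE, positively dependent p-values).**
For every graph `G` and level `α ∈ (0,1)`, if the vector of `N` p-values is PRDS on each null
and every null p-value is superuniform, then single-step QuTE (`c = 1`) at level `α`
satisfies `FDR ≤ α |H⁰| / N`. -/
theorem qute_single_step_fdr_control_prds
    {V : Type*} [Fintype V] [DecidableEq V] [Nonempty V] (G : SimpleGraph V)
    (n : V → ℕ) (hn : ∀ a, 1 ≤ n a)
    {Ω : Type*} [MeasurableSpace Ω] (μ : Measure Ω) [IsProbabilityMeasure μ]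
    (P : Ω → (Σ a : V, Fin (n a)) → ℝ)
    (hPmeas : ∀ i, Measurable fun ω => P ω i)
    (hPrange : ∀ ω i, P ω i ∈ Set.Icc (0 : ℝ) 1)
    (H0 : Finset (Σ a : V, Fin (n a)))
    (hnull : ∀ i ∈ H0, ∀ u ∈ Set.Icc (0 : ℝ) 1,
      μ {ω | P ω i ≤ u} ≤ ENNReal.ofReal u)
    -- PRDS on each null: for every measurable nondecreasing set `D ⊆ [0,1]^N` and
    -- all `0 < s ≤ t ≤ 1` with `Pr(P i ≤ s) > 0`,
    -- `Pr(P ∈ D | P i ≤ s) ≤ Pr(P ∈ D | P i ≤ t)`.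
    (hPRDS : ∀ i ∈ H0, ∀ D : Set ((Σ a : V, Fin (n a)) → ℝ), MeasurableSet D →
      (∀ x ∈ D, ∀ y ∈ Set.Icc (0 : (Σ a : V, Fin (n a)) → ℝ) 1, x ≤ y → y ∈ D) →
      ∀ s t : ℝ, 0 < s → s ≤ t → t ≤ 1 → 0 < μ {ω | P ω i ≤ s} →
        (μ[|{ω | P ω i ≤ s}]) {ω | P ω ∈ D} ≤ (μ[|{ω | P ω i ≤ t}]) {ω | P ω ∈ D})
    (α : ℝ) (hα : α ∈ Set.Ioo (0 : ℝ) 1) :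
    ∫ ω, (((quteRej G n 1 α (P ω) ∩ H0).card : ℝ) /
        (max ((quteRej G n 1 α (P ω)).card) 1 : ℕ)) ∂μ
      ≤ α * H0.card / Fintype.card (Σ a : V, Fin (n a)) :=
  qute_single_step_fdr_control_prds_general G n μ P hPmeas H0 hnull hPRDS α hα
end

section
/- QuTE never rejects more than centralized BH: for every graph G, every integer c ≥ 0, every level α ∈ (0,1) and every fixed assignment of p-values, the set of hypotheses rejected by the c-step QuTE procedure at level α is contained in the BH rejection set Rej_α(P) computed on the full vector P of all N p-values at level α; consequently the power of QuTE can never exceed the power of the centralized BH procedure. -/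
open MeasureTheory ProbabilityTheory Finset

open Classical in
lemma bhCount_anti {I : Type*} [Fintype I] {α : ℝ} {P Q : I → ℝ}
    (hPQ : ∀ i, P i ≤ Q i) : bhCount α Q ≤ bhCount α P := by
  refine Nat.findGreatest_mono (fun k hk => hk.trans (Finset.card_le_card ?_)) le_rfl
  intro i hi
  simp only [Finset.mem_filter, Finset.mem_univ, true_and] at hi ⊢
  exact (hPQ i).trans hi

/-- **QuTE never rejects more than centralized BH.**
For every graph `G`, every `c ≥ 0`, every level `α ∈ (0,1)` and every fixed assignment of
p-values, the rejection set of `c`-step QuTE at level `α` is contained in the BH rejection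
set computed on the full vector of all `N` p-values at level `α`. -/
theorem quteRej_subset_bhRej
    {V : Type*} [Fintype V] (G : SimpleGraph V)
    (n : V → ℕ) (hn : ∀ a, 1 ≤ n a) (c : ℕ)
    (P : (Σ a : V, Fin (n a)) → ℝ) (hPrange : ∀ i, P i ∈ Set.Icc (0 : ℝ) 1)
    (α : ℝ) (hα : α ∈ Set.Ioo (0 : ℝ) 1) :
    quteRej G n c α P ⊆ bhRej α P := by
  intro i hi
  simp only [quteRej, Finset.mem_filter, Finset.mem_univ, true_and] at hi
  obtain ⟨b, -, hle⟩ := hi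
  simp only [bhRej, Finset.mem_filter, Finset.mem_univ, true_and]
  refine hle.trans ?_
  have hcount : bhCount α (quteMasked G n c P b) ≤ bhCount α P :=
    bhCount_anti (fun j => by
      simp only [quteMasked]
      split
      · exact le_rfl
      · exact (hPrange j).2)
  have hα0 := hα.1.le
  gcongr
end

section
/- QuTE reduces to Bonferroni on the empty graph: if the graph G has no edges and each node hosts exactly one hypothesis (n_a = 1 for all a, so N = |V|), then for every integer c ≥ 0, every level α ∈ (0,1) and every fixed assignment of p-values, the c-step QuTE procedure at level α rejects the hypothesis at node a if and only if P_a ≤ α/N (the Bonferroni correction). -/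
open MeasureTheory ProbabilityTheory Finset

/-!
On the empty graph every node only sees its own p-values, all others being masked to `1 > α`.
The BH count at a node therefore never exceeds the number of hypotheses it hosts, here one, so
the local BH threshold is either `0` or `α / N`; and it is `α / N` exactly when the node's own
p-value is `≤ α / N`.
-/

section BenjaminiHochberg

variable {I : Type*} [Fintype I] (α : ℝ) (P : I → ℝ)

open Classical in
theorem bhCount_le_card_filter :
    bhCount α P ≤ #{i | P i ≤ α * bhCount α P / Fintype.card I} :=
  Nat.findGreatest_spec (P := fun k => k ≤ #{i | P i ≤ α * k / Fintype.card I})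
    (Nat.zero_le _) (Nat.zero_le _)

open Classical in
theorem bhCount_le_card_filter_le_self (hα : 0 ≤ α) : bhCount α P ≤ #{i | P i ≤ α} := by
  refine (bhCount_le_card_filter α P).trans (card_le_card (monotone_filter_right _ ?_))
  intro i _ hi
  have hk : (bhCount α P : ℝ) ≤ Fintype.card I := by exact_mod_cast Nat.findGreatest_le _
  calc P i ≤ α * bhCount α P / Fintype.card I := hi
    _ ≤ α := div_le_of_le_mul₀ (Nat.cast_nonneg _) hα (mul_le_mul_of_nonneg_left hk hα)

variable {α P}

theorem one_le_bhCount {i : I} (hi : P i ≤ α / Fintype.card I) : 1 ≤ bhCount α P := by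
  classical
  refine Nat.le_findGreatest (Fintype.card_pos_iff.mpr ⟨i⟩) (card_pos.mpr ⟨i, ?_⟩)
  simpa using hi

end BenjaminiHochberg

theorem SimpleGraph.edist_bot_le_natCast_iff {V : Type*} {u v : V} {c : ℕ} :
    (⊥ : SimpleGraph V).edist u v ≤ c ↔ u = v := by
  classical
  rw [SimpleGraph.edist_bot]
  split_ifs with h <;> simp [h]

section EmptyGraph

variable {V : Type*} {n : V → ℕ} {c : ℕ} {P : (Σ a : V, Fin (n a)) → ℝ}

theorem quteMasked_bot_self (i : Σ a : V, Fin (n a)) :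
    quteMasked ⊥ n c P i.1 i = P i := by
  simp [quteMasked]

theorem quteMasked_bot_of_ne {b : V} {i : Σ a : V, Fin (n a)} (h : i.1 ≠ b) :
    quteMasked ⊥ n c P b i = 1 := by
  simp [quteMasked, SimpleGraph.edist_bot_le_natCast_iff, Ne.symm h]

theorem card_filter_sigma_fst_eq_le [Fintype V] [DecidableEq V] (b : V) :
    #{i : Σ a : V, Fin (n a) | i.1 = b} ≤ n b := by
  calc #{i : Σ a : V, Fin (n a) | i.1 = b}
      ≤ #(univ.map (Function.Embedding.sigmaMk (β := fun a => Fin (n a)) b)) := by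
        refine card_le_card fun ⟨a, j⟩ hi => ?_
        obtain rfl : a = b := (mem_filter.mp hi).2
        simp
    _ = n b := by simp

theorem bhCount_quteMasked_bot_le [Fintype V] {α : ℝ} (hα₀ : 0 ≤ α) (hα₁ : α < 1) (b : V) :
    bhCount α (quteMasked ⊥ n c P b) ≤ n b := by
  classical
  refine (bhCount_le_card_filter_le_self α _ hα₀).trans
    ((card_le_card (monotone_filter_right _ ?_)).trans (card_filter_sigma_fst_eq_le b))
  intro i _ hi
  by_contra h
  rw [quteMasked_bot_of_ne h] at hi
  exact hα₁.not_ge hi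

end EmptyGraph

theorem quteRej_empty_graph_eq_bonferroni_general
    {V : Type*} [Fintype V] (G : SimpleGraph V) (hG : G = ⊥)
    (n : V → ℕ) (hn : ∀ a, n a = 1) (c : ℕ)
    (P : (Σ a : V, Fin (n a)) → ℝ)
    (α : ℝ) (hα : α ∈ Set.Ioo (0 : ℝ) 1) :
    ∀ i : (Σ a : V, Fin (n a)),
      i ∈ quteRej G n c α P ↔ P i ≤ α / Fintype.card (Σ a : V, Fin (n a)) := by
  subst hG
  intro i
  set N := Fintype.card (Σ a : V, Fin (n a))
  set k := bhCount α (quteMasked ⊥ n c P i.1)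
  have hk_le : (k : ℝ) ≤ 1 := by
    exact_mod_cast (bhCount_quteMasked_bot_le hα.1.le hα.2 i.1).trans_eq (hn i.1)
  simp only [quteRej, mem_filter, mem_univ, true_and, SimpleGraph.edist_bot_le_natCast_iff,
    exists_eq_left']
  constructor
  · intro hi
    calc P i ≤ α * k / N := hi
      _ ≤ α * 1 / N := by gcongr; exact hα.1.le
      _ = α / N := by rw [mul_one]
  · intro hi
    have hk_ge : (1 : ℝ) ≤ k := by
      have hi' : quteMasked ⊥ n c P i.1 i ≤ α / N := by rwa [quteMasked_bot_self]
      exact_mod_cast one_le_bhCount hi'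
    calc P i ≤ α * 1 / N := by rwa [mul_one]
      _ ≤ α * k / N := by gcongr; exact hα.1.le

/-- **QuTE reduces to Bonferroni on the empty graph.**
If the graph has no edges and each node hosts exactly one hypothesis (`n a = 1` for all `a`,
so `N = |V|`), then for every `c ≥ 0`, every level `α ∈ (0,1)` and every fixed assignment of
p-values, `c`-step QuTE at level `α` rejects the hypothesis at node `a` iff `P_a ≤ α / N`. -/
theorem quteRej_empty_graph_eq_bonferroni
    {V : Type*} [Fintype V] (G : SimpleGraph V) (hG : G = ⊥)
    (n : V → ℕ) (hn : ∀ a, n a = 1) (c : ℕ)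
    (P : (Σ a : V, Fin (n a)) → ℝ) (hPrange : ∀ i, P i ∈ Set.Icc (0 : ℝ) 1)
    (α : ℝ) (hα : α ∈ Set.Ioo (0 : ℝ) 1) :
    ∀ i : (Σ a : V, Fin (n a)),
      i ∈ quteRej G n c α P ↔ P i ≤ α / Fintype.card (Σ a : V, Fin (n a)) :=
  quteRej_empty_graph_eq_bonferroni_general G hG n hn c P α hα
end
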